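/- For every guess g ∈ G and every candidate set C ⊆ S, V_{2|C|+1}(g,C) = V*(g,C); moreover LB_{2|C|+1}(C) = MinTotal(C) for every candidate set C ⊆ S. That is, the sequence of lower bounds stabilizes at the true value after at most 2|C|+1 iterations. -/

import Mathlib

/-!
Formalization of guessing games (Wordle-style), following the paper's definitions:
guesses `G`, secrets `S ⊆ G`, responses `R` with `|R| > 1`, affirmative response
`r* ∈ R`, and an answering function `a` with `a(g,s) = r* ↔ g = s`.
-/

structure GuessingGame (α ρ : Type*) [DecidableEq α] [DecidableEq ρ] where
  G : Finset α
  S : Finset α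
  R : Finset ρ
  rstar : ρ
  ans : α → α → ρ
  S_subset_G : S ⊆ G
  one_lt_card_R : 1 < R.card
  rstar_mem : rstar ∈ R
  ans_mem : ∀ g ∈ G, ∀ s ∈ S, ans g s ∈ R
  ans_eq_rstar_iff : ∀ g ∈ G, ∀ s ∈ S, (ans g s = rstar ↔ g = s)

namespace GuessingGame

variable {α ρ : Type*} [DecidableEq α] [DecidableEq ρ] (gm : GuessingGame α ρ)

/-- The split `C_{g,r} = {c ∈ C : a(g,c) = r}`. -/
def split (C : Finset α) (g : α) (r : ρ) : Finset α :=
  C.filter fun c => gm.ans g c = r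

/-- `nSplits(g,C) = |{r ∈ R : C_{g,r} ≠ ∅}|`. -/
def nSplits (g : α) (C : Finset α) : ℕ :=
  (gm.R.filter fun r => (gm.split C g r).Nonempty).card

/-- The useful guesses `UG(C)`: for `|C| > 1` the guesses `g ∈ G` with
`nSplits(g,C) ≠ 1`; for `|C| ≤ 1`, `UG(C) = C`. -/
def UG (C : Finset α) : Finset α :=
  if 1 < C.card then gm.G.filter fun g => gm.nSplits g C ≠ 1 else C

/-- `MaxSplits(C) = max_{g ∈ G} nSplits(g,C)`. -/
def MaxSplits (C : Finset α) : ℕ :=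
  gm.G.sup fun g => gm.nSplits g C

end GuessingGame

/-- `Bound(n,b)`: `Bound(0,b) = 0`, `Bound(n,1) = n(n+1)/2`, and for `n > 0`, `b > 1`,
`Bound(n,b) = Σ_{i=1}^{k} i·b^{i-1} + (k+1)·(n - (b^k - 1)/(b-1))` where
`k = ⌊log_b (n(b-1)+1)⌋`. -/
def Bound (n b : ℕ) : ℕ :=
  if n = 0 then 0
  else if b = 1 then n * (n + 1) / 2
  else
    (∑ i ∈ Finset.range (Nat.log b (n * (b - 1) + 1)), (i + 1) * b ^ i) +
      (Nat.log b (n * (b - 1) + 1) + 1) *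
        (n - (b ^ Nat.log b (n * (b - 1) + 1) - 1) / (b - 1))

namespace GuessingGame

variable {α ρ : Type*} [DecidableEq α] [DecidableEq ρ] (gm : GuessingGame α ρ)

/-- Fuel-based implementation of the well-founded recursion defining `MinTotal`:
`MinTotal(∅) = 0` and for nonempty `C`,
`MinTotal(C) = min_{g ∈ UG(C)} (|C| + Σ_{r ∈ R \ {r*}} MinTotal(C_{g,r}))`.
Fuel `|C|` suffices since for a useful guess every split is a proper subset of `C`. -/
noncomputable def MinTotalAux : ℕ → Finset α → ℕ
  | 0, _ => 0
  | n + 1, C =>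
    if C = ∅ then 0
    else
      sInf (↑((gm.UG C).image fun g =>
        C.card + ∑ r ∈ gm.R.erase gm.rstar, MinTotalAux n (gm.split C g r)) : Set ℕ)

/-- `MinTotal(C)`. -/
noncomputable def MinTotal (C : Finset α) : ℕ :=
  gm.MinTotalAux C.card C

/-- `V*(g,C) = |C| + Σ_{r ∈ R \ {r*}} MinTotal(C_{g,r})`. -/
noncomputable def Vstar (g : α) (C : Finset α) : ℕ :=
  C.card + ∑ r ∈ gm.R.erase gm.rstar, gm.MinTotal (gm.split C g r)

/-- The lower bounds `LB_i` (`i ≥ 1`; `LB 0` is junk):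
`LB_1(C) = Bound(|C|, MaxSplits(S))`, `LB_2(C) = Bound(|C|, MaxSplits(C))`, and for
`i ≥ 1`, `LB_{i+2}(∅) = 0` and `LB_{i+2}(C) = min_{g ∈ UG(C)} V_i(g,C)` for nonempty `C`,
where `V_i(g,C) = |C| + Σ_{r ∈ R \ {r*}} LB_i(C_{g,r})`. -/
noncomputable def LB : ℕ → Finset α → ℕ
  | 0, _ => 0
  | 1, C => Bound C.card (gm.MaxSplits gm.S)
  | 2, C => Bound C.card (gm.MaxSplits C)
  | n + 3, C =>
    if C = ∅ then 0
    else
      sInf (↑((gm.UG C).image fun g =>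
        C.card + ∑ r ∈ gm.R.erase gm.rstar, LB (n + 1) (gm.split C g r)) : Set ℕ)

/-- `V_i(g,C) = |C| + Σ_{r ∈ R \ {r*}} LB_i(C_{g,r})`. -/
noncomputable def V (i : ℕ) (g : α) (C : Finset α) : ℕ :=
  C.card + ∑ r ∈ gm.R.erase gm.rstar, gm.LB i (gm.split C g r)

end GuessingGame

/-!
Both `MinTotal` and the odd-indexed lower bounds `LB (2n+1)` for `n ≥ 1` are obtained by
iterating the same Bellman operator, which minimises over useful guesses. A useful guess splits
`C` into proper subsets (the affirmative response is excluded), so the value of the operator at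
`C` only depends on its argument at proper subsets of `C`. Starting from `LB 1 ∅ = 0`, one
iteration (two indices of `LB`) per element of `C` therefore makes `LB (2|C|+1)` agree with the
fuelled recursion defining `MinTotal`.
-/

namespace GuessingGame

variable {α ρ : Type*} [DecidableEq α] [DecidableEq ρ] (gm : GuessingGame α ρ)

noncomputable def bellman (f : Finset α → ℕ) (C : Finset α) : ℕ :=
  if C = ∅ then 0
  else
    sInf (↑((gm.UG C).image fun g =>
      C.card + ∑ r ∈ gm.R.erase gm.rstar, f (gm.split C g r)) : Set ℕ)

theorem MinTotalAux_succ (n : ℕ) : gm.MinTotalAux (n + 1) = gm.bellman (gm.MinTotalAux n) :=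
  rfl

theorem LB_add_three (n : ℕ) : gm.LB (n + 3) = gm.bellman (gm.LB (n + 1)) :=
  rfl

theorem LB_one_empty : gm.LB 1 ∅ = 0 := by
  simp [LB, Bound]

theorem split_subset (C : Finset α) (g : α) (r : ρ) : gm.split C g r ⊆ C :=
  Finset.filter_subset _ _

theorem nSplits_eq_one_of_split_eq {C : Finset α} (hCS : C ⊆ gm.S) (hC : C.Nonempty)
    {g : α} (hg : g ∈ gm.G) {r : ρ} (h : gm.split C g r = C) : gm.nSplits g C = 1 := by
  obtain ⟨c, hc⟩ := hC
  have hcr : gm.ans g c = r := (Finset.mem_filter.1 (h.ge hc)).2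
  rw [nSplits, Finset.card_eq_one]
  refine ⟨r, Finset.eq_singleton_iff_unique_mem.2 ⟨?_, fun r' hr' => ?_⟩⟩
  · have hrR : r ∈ gm.R := hcr ▸ gm.ans_mem g hg c (hCS hc)
    exact Finset.mem_filter.2 ⟨hrR, c, h.ge hc⟩
  · obtain ⟨d, hd⟩ := (Finset.mem_filter.1 hr').2
    rw [← (Finset.mem_filter.1 hd).2]
    exact (Finset.mem_filter.1 (h.ge (Finset.mem_filter.1 hd).1)).2

theorem split_ssubset_of_mem_UG {C : Finset α} (hCS : C ⊆ gm.S) {g : α} (hg : g ∈ gm.UG C)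
    {r : ρ} (hr : r ≠ gm.rstar) : gm.split C g r ⊂ C := by
  unfold UG at hg
  split_ifs at hg with hC
  · obtain ⟨hgG, hsplits⟩ := Finset.mem_filter.1 hg
    refine (gm.split_subset C g r).ssubset_of_ne fun h => hsplits ?_
    exact gm.nSplits_eq_one_of_split_eq hCS (Finset.card_pos.1 (by omega)) hgG h
  · obtain rfl : C = {g} :=
      Finset.eq_singleton_iff_unique_mem.2
        ⟨hg, fun c hc => Finset.card_le_one.1 (by omega) c hc g hg⟩
    have hgS : g ∈ gm.S := hCS (Finset.mem_singleton_self g)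
    have hgg : gm.ans g g = gm.rstar := (gm.ans_eq_rstar_iff g (gm.S_subset_G hgS) g hgS).2 rfl
    rw [split, Finset.filter_singleton, if_neg (hgg ▸ Ne.symm hr)]
    exact Finset.empty_ssubset.2 (Finset.singleton_nonempty g)

theorem bellman_congr {f h : Finset α → ℕ} {C : Finset α} (hCS : C ⊆ gm.S)
    (hfh : ∀ D ⊂ C, f D = h D) : gm.bellman f C = gm.bellman h C := by
  unfold bellman
  congr 3
  refine Finset.image_congr fun g hg => ?_
  refine congrArg (C.card + ·) (Finset.sum_congr rfl fun r hr => hfh _ ?_)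
  exact gm.split_ssubset_of_mem_UG hCS hg (Finset.ne_of_mem_erase hr)

theorem MinTotalAux_succ_of_card_le {n : ℕ} {C : Finset α} (hCS : C ⊆ gm.S)
    (hCn : C.card ≤ n) : gm.MinTotalAux (n + 1) C = gm.MinTotalAux n C := by
  induction n generalizing C with
  | zero => simp [Finset.card_eq_zero.1 (Nat.le_zero.1 hCn), MinTotalAux]
  | succ n ih =>
    rw [MinTotalAux_succ, MinTotalAux_succ]
    refine gm.bellman_congr hCS fun D hD => ih (hD.subset.trans hCS) ?_
    have := Finset.card_lt_card hD
    omega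

theorem MinTotalAux_eq_MinTotal {n : ℕ} {C : Finset α} (hCS : C ⊆ gm.S) (hCn : C.card ≤ n) :
    gm.MinTotalAux n C = gm.MinTotal C := by
  induction n, hCn using Nat.le_induction with
  | base => rfl
  | succ n hCn ih => rw [gm.MinTotalAux_succ_of_card_le hCS hCn, ih]

theorem LB_two_mul_add_one_eq_MinTotalAux {n : ℕ} {C : Finset α} (hCS : C ⊆ gm.S)
    (hCn : C.card ≤ n) : gm.LB (2 * n + 1) C = gm.MinTotalAux n C := by
  induction n generalizing C with
  | zero =>
    rw [Finset.card_eq_zero.1 (Nat.le_zero.1 hCn), LB_one_empty]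
    rfl
  | succ n ih =>
    rw [show 2 * (n + 1) + 1 = 2 * n + 3 by ring, LB_add_three, MinTotalAux_succ]
    refine gm.bellman_congr hCS fun D hD => ih (hD.subset.trans hCS) ?_
    have := Finset.card_lt_card hD
    omega

theorem LB_two_mul_add_one_eq_MinTotal {n : ℕ} {C : Finset α} (hCS : C ⊆ gm.S)
    (hCn : C.card ≤ n) : gm.LB (2 * n + 1) C = gm.MinTotal C :=
  (gm.LB_two_mul_add_one_eq_MinTotalAux hCS hCn).trans (gm.MinTotalAux_eq_MinTotal hCS hCn)

end GuessingGame

section Statements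

open GuessingGame

variable {α ρ : Type*} [DecidableEq α] [DecidableEq ρ]

theorem statement_18 (gm : GuessingGame α ρ) :
    (∀ g ∈ gm.G, ∀ C ⊆ gm.S, gm.V (2 * C.card + 1) g C = gm.Vstar g C) ∧
      (∀ C ⊆ gm.S, gm.LB (2 * C.card + 1) C = gm.MinTotal C) := by
  refine ⟨fun g _ C hCS => ?_, fun C hCS => gm.LB_two_mul_add_one_eq_MinTotal hCS le_rfl⟩
  refine congrArg (C.card + ·) (Finset.sum_congr rfl fun r _ => ?_)
  exact gm.LB_two_mul_add_one_eq_MinTotal ((gm.split_subset C g r).trans hCS)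
    (Finset.card_le_card (gm.split_subset C g r))

end Statements
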